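/- Let n = 3k with k odd, F the finite field with 2^n elements, i a positive integer with gcd(i,n) = 1, and f : F → F the Gold function f(x) = x^(2^i+1). Let ξ ∈ F satisfy ξ^8 = ξ (so ξ ∈ F_{2^3} ⊂ F) and let μ ∈ F, μ ≠ 0. Then Z = { ( x , μ^(−(2^i+1)) · ( ξ·Tr(μx) + Tr(ξ^(2^i)·μx) ) ) : x ∈ F } is a WZ space of f, where Tr denotes the absolute trace F → 𝔽₂ and its values 0, 1 ∈ 𝔽₂ are identified with the elements 0, 1 of F. -/

import Mathlib

noncomputable instance (n : ℕ) : Fintype (GaloisField 2 n) := Fintype.ofFinite _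

/-- The absolute trace from `GF(2^n)` to `𝔽₂`. -/
noncomputable def Tr (n : ℕ) : GaloisField 2 n → ZMod 2 :=
  Algebra.trace (ZMod 2) (GaloisField 2 n)

/-- The Walsh transform of `f : GF(2^n) → GF(2^n)` at `(a, b)`. -/
noncomputable def W (n : ℕ) (f : GaloisField 2 n → GaloisField 2 n)
    (a b : GaloisField 2 n) : ℤ :=
  ∑ x : GaloisField 2 n, (-1) ^ (Tr n (a * x + b * f x)).val

/-- A WZ space of `f`: an `𝔽₂`-subspace of `GF(2^n) × GF(2^n)` of dimension `n`
all of whose nonzero elements are Walsh zeros of `f`. -/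
def IsWZSpace (n : ℕ) (f : GaloisField 2 n → GaloisField 2 n)
    (S : Submodule (ZMod 2) (GaloisField 2 n × GaloisField 2 n)) : Prop :=
  Module.finrank (ZMod 2) S = n ∧
    ∀ p ∈ S, p ≠ (0 : GaloisField 2 n × GaloisField 2 n) → W n f p.1 p.2 = 0


lemma Tr_add (n : ℕ) (x y : GaloisField 2 n) : Tr n (x + y) = Tr n x + Tr n y :=
  map_add (Algebra.trace (ZMod 2) (GaloisField 2 n)) x y

lemma Tr_smul (n : ℕ) (s : ZMod 2) (x : GaloisField 2 n) :
    Tr n (algebraMap (ZMod 2) (GaloisField 2 n) s * x) = s * Tr n x := by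
  rw [← Algebra.smul_def]
  exact map_smul (Algebra.trace (ZMod 2) (GaloisField 2 n)) s x

lemma Tr_frob (n : ℕ) (z : GaloisField 2 n) : Tr n (z ^ 2) = Tr n z := by
  apply (algebraMap (ZMod 2) (GaloisField 2 n)).injective
  simp only [Tr]
  rw [trace_eq_sum_automorphisms, trace_eq_sum_automorphisms]
  have : ∀ σ : GaloisField 2 n ≃ₐ[ZMod 2] GaloisField 2 n, σ (z ^ 2) = (σ z) ^ 2 := by
    intro σ; exact map_pow σ z 2
  rw [Finset.sum_congr rfl (fun σ _ => this σ), ← sum_pow_char,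
    ← trace_eq_sum_automorphisms, ← map_pow]
  congr 1
  have hv : ∀ v : ZMod 2, v ^ 2 = v := by decide
  exact hv _

lemma Tr_frob_pow (n j : ℕ) (z : GaloisField 2 n) : Tr n (z ^ 2 ^ j) = Tr n z := by
  induction j with
  | zero => simp
  | succ j ih =>
    have : z ^ 2 ^ (j + 1) = (z ^ 2 ^ j) ^ 2 := by
      rw [← pow_mul, pow_succ]
    rw [this, Tr_frob, ih]

lemma key (n i : ℕ) (f : GaloisField 2 n → GaloisField 2 n)
    (hf : ∀ x, f x = x ^ (2 ^ i + 1)) (a b x0 : GaloisField 2 n)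
    (hker : (b * x0 ^ 2 ^ i) ^ 2 ^ i = b * x0)
    (he : Tr n (b * x0 ^ (2 ^ i + 1) + a * x0) = 1) :
    W n f a b = 0 := by
  have hT : ∀ x : GaloisField 2 n,
      Tr n (a * (x + x0) + b * f (x + x0)) = Tr n (a * x + b * f x) + 1 := by
    intro x
    have hcross : (b * x0) * x ^ 2 ^ i = ((b * x0 ^ 2 ^ i) * x) ^ 2 ^ i := by
      rw [mul_pow, hker]
    have hsplit : a * (x + x0) + b * f (x + x0)
        = (a * x + b * f x) + ((((b * x0 ^ 2 ^ i) * x) + ((b * x0 ^ 2 ^ i) * x) ^ 2 ^ i)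
            + (b * x0 ^ (2 ^ i + 1) + a * x0)) := by
      rw [hf, hf, pow_succ (x + x0), pow_succ x, pow_succ x0, add_pow_char_pow,
        mul_pow (b * x0 ^ 2 ^ i) x, hker]
      ring
    have hcross0 : Tr n (((b * x0 ^ 2 ^ i) * x) + ((b * x0 ^ 2 ^ i) * x) ^ 2 ^ i) = 0 := by
      rw [Tr_add, Tr_frob_pow]
      have : ∀ u : ZMod 2, u + u = 0 := by decide
      exact this _
    rw [hsplit,
      Tr_add n (a * x + b * f x) _,
      Tr_add n ((((b * x0 ^ 2 ^ i) * x) + ((b * x0 ^ 2 ^ i) * x) ^ 2 ^ i))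
        (b * x0 ^ (2 ^ i + 1) + a * x0),
      hcross0, zero_add, he]
  have hneg : ∀ v : ZMod 2, (-1 : ℤ) ^ ((v + 1).val) = -(-1 : ℤ) ^ v.val := by decide
  have hsum : W n f a b = - W n f a b := by
    unfold W
    calc ∑ x : GaloisField 2 n, (-1 : ℤ) ^ (Tr n (a * x + b * f x)).val
        = ∑ x : GaloisField 2 n,
            (-1 : ℤ) ^ (Tr n (a * (x + x0) + b * f (x + x0))).val :=
          (Equiv.sum_comp (Equiv.addRight x0)
            (fun x => (-1 : ℤ) ^ (Tr n (a * x + b * f x)).val)).symm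
      _ = ∑ x : GaloisField 2 n, -(-1 : ℤ) ^ (Tr n (a * x + b * f x)).val := by
          refine Finset.sum_congr rfl fun x _ => ?_
          rw [hT x, hneg]
      _ = - ∑ x : GaloisField 2 n, (-1 : ℤ) ^ (Tr n (a * x + b * f x)).val := by
          rw [Finset.sum_neg_distrib]
  omega

lemma pow8_stable {n : ℕ} {c : GaloisField 2 n} (h : c ^ 8 = c) (m : ℕ) :
    (c ^ m) ^ 8 = c ^ m := by
  rw [← pow_mul, mul_comm, pow_mul, h]

lemma pow_red {n : ℕ} {c : GaloisField 2 n} (h : c ^ 8 = c) :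
    ∀ j, c ^ 2 ^ j = c ^ 2 ^ (j % 3) := by
  intro j
  induction j using Nat.strong_induction_on with
  | _ j ih =>
    rcases lt_or_ge j 3 with hj | hj
    · rw [Nat.mod_eq_of_lt hj]
    · obtain ⟨m, rfl⟩ : ∃ m, j = m + 3 := ⟨j - 3, by omega⟩
      have h8 : c ^ 2 ^ (m + 3) = c ^ 2 ^ m := by
        have he : (2 : ℕ) ^ (m + 3) = 2 ^ m * 8 := by ring
        rw [he, pow_mul, pow8_stable h]
      rw [h8, ih m (by omega), Nat.add_mod_right]

lemma tr_aux (n : ℕ) (u w : GaloisField 2 n) :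
    Tr n (u * (w * algebraMap (ZMod 2) (GaloisField 2 n) (Tr n u) +
      algebraMap (ZMod 2) (GaloisField 2 n) (Tr n (w * u)))) = 0 := by
  have hsplit : u * (w * algebraMap (ZMod 2) (GaloisField 2 n) (Tr n u) +
      algebraMap (ZMod 2) (GaloisField 2 n) (Tr n (w * u)))
      = algebraMap (ZMod 2) (GaloisField 2 n) (Tr n u) * (w * u) +
        algebraMap (ZMod 2) (GaloisField 2 n) (Tr n (w * u)) * u := by ring
  rw [hsplit, Tr_add, Tr_smul, Tr_smul, mul_comm (Tr n (w * u)) (Tr n u)]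
  have : ∀ v : ZMod 2, v + v = 0 := by decide
  exact this _

lemma e_pow_self (n : ℕ) (s : ZMod 2) (m : ℕ) (hm : 0 < m) :
    (algebraMap (ZMod 2) (GaloisField 2 n) s) ^ m = algebraMap (ZMod 2) (GaloisField 2 n) s := by
  rw [← map_pow]
  congr 1
  have : ∀ v : ZMod 2, v = 0 ∨ v = 1 := by decide
  rcases this s with h | h <;> subst h
  · rw [zero_pow (by omega)]
  · rw [one_pow]

lemma Tr_one (n : ℕ) (hn0 : n ≠ 0) (hodd : Odd n) : Tr n 1 = 1 := by
  have h1 : (1 : GaloisField 2 n) = algebraMap (ZMod 2) (GaloisField 2 n) 1 :=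
    (map_one _).symm
  rw [Tr, h1, Algebra.trace_algebraMap]
  obtain ⟨m, rfl⟩ := hodd
  rw [nsmul_eq_mul, mul_one, GaloisField.finrank 2 (by omega)]
  push_cast
  rw [show ((2 : ZMod 2)) = 0 by decide]
  ring

lemma key_mu (n i : ℕ) (f : GaloisField 2 n → GaloisField 2 n)
    (hf : ∀ x, f x = x ^ (2 ^ i + 1)) (μ x c d : GaloisField 2 n)
    (hμ : μ ≠ 0)
    (hA : c ^ 2 ^ i * (d ^ 2 ^ i) ^ 2 ^ i = c * d)
    (hB : c * (d ^ 2 ^ i * d) = 1)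
    (hTd : Tr n (x * (μ * d)) = 0)
    (hT1 : Tr n 1 = 1) :
    W n f x ((μ ^ (2 ^ i + 1))⁻¹ * c) = 0 := by
  have hμP : μ ^ (2 ^ i : ℕ) ≠ 0 := pow_ne_zero _ hμ
  have hμE : μ ^ (2 ^ i + 1) ≠ 0 := pow_ne_zero _ hμ
  apply key n i f hf x _ (μ * d)
  · -- kernel condition
    have h1 : (μ ^ (2 ^ i + 1))⁻¹ * c * (μ * d) ^ 2 ^ i = μ⁻¹ * (c * d ^ 2 ^ i) := by
      rw [mul_pow μ d, pow_succ μ]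
      field_simp
    have h2 : (μ⁻¹ * (c * d ^ 2 ^ i)) ^ 2 ^ i
        = (μ⁻¹) ^ 2 ^ i * (c ^ 2 ^ i * (d ^ 2 ^ i) ^ 2 ^ i) := by
      rw [mul_pow, mul_pow]
    rw [h1, h2, hA]
    rw [pow_succ μ]
    field_simp
    ring
    rw [← mul_pow, mul_inv_cancel₀ hμ, one_pow, one_mul]
  · -- epsilon condition
    have h3 : (μ ^ (2 ^ i + 1))⁻¹ * c * (μ * d) ^ (2 ^ i + 1) = c * (d ^ 2 ^ i * d) := by
      rw [mul_pow μ d, pow_succ d]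
      field_simp
    rw [h3, hB, Tr_add, hT1, hTd, add_zero]

/-- For `n = 3k` with `k` odd, `gcd(i,n) = 1`, `ξ ∈ F_{2^3}` (i.e. `ξ^8 = ξ`) and
`μ ≠ 0`, the set `Z = {(x, μ^(−(2^i+1))·(ξ·Tr(μx) + Tr(ξ^(2^i)·μx))) : x ∈ F}` is a
WZ space of the Gold function `f(x) = x^(2^i+1)`. Trace values in `𝔽₂` are mapped
into `F` via the algebra map. -/
theorem stmt11 (n i k : ℕ) (hk : Odd k) (hn : n = 3 * k) (hi : 0 < i)
    (hgcd : Nat.gcd i n = 1)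
    (f : GaloisField 2 n → GaloisField 2 n) (hf : ∀ x, f x = x ^ (2 ^ i + 1))
    (ξ μ : GaloisField 2 n) (hξ : ξ ^ 8 = ξ) (hμ : μ ≠ 0) :
    ∃ Z : Submodule (ZMod 2) (GaloisField 2 n × GaloisField 2 n),
      (Z : Set (GaloisField 2 n × GaloisField 2 n)) =
        Set.range (fun x : GaloisField 2 n =>
          (x, (μ ^ (2 ^ i + 1))⁻¹ *
            (ξ * algebraMap (ZMod 2) (GaloisField 2 n) (Tr n (μ * x)) +
              algebraMap (ZMod 2) (GaloisField 2 n) (Tr n (ξ ^ (2 ^ i) * μ * x))))) ∧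
      IsWZSpace n f Z := by
  have hk0 : k ≠ 0 := by rintro rfl; simp [Nat.odd_iff] at hk
  have hn0 : n ≠ 0 := by omega
  have hodd : Odd n := by rw [hn]; exact Nat.odd_mul.mpr ⟨⟨1, rfl⟩, hk⟩
  have hT1 : Tr n 1 = 1 := Tr_one n hn0 hodd
  have i3 : i % 3 = 1 ∨ i % 3 = 2 := by
    have h3n : (3 : ℕ) ∣ n := ⟨k, hn⟩
    have h3i : ¬ (3 ∣ i) := by
      intro h3i
      have := Nat.dvd_gcd h3i h3n
      rw [hgcd] at this
      omega
    omega
  have hGadd : ∀ x y : GaloisField 2 n,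
      (μ ^ (2 ^ i + 1))⁻¹ *
          (ξ * algebraMap (ZMod 2) (GaloisField 2 n) (Tr n (μ * (x + y))) +
            algebraMap (ZMod 2) (GaloisField 2 n) (Tr n (ξ ^ (2 ^ i) * μ * (x + y))))
        = (μ ^ (2 ^ i + 1))⁻¹ *
            (ξ * algebraMap (ZMod 2) (GaloisField 2 n) (Tr n (μ * x)) +
              algebraMap (ZMod 2) (GaloisField 2 n) (Tr n (ξ ^ (2 ^ i) * μ * x)))
          + (μ ^ (2 ^ i + 1))⁻¹ *
            (ξ * algebraMap (ZMod 2) (GaloisField 2 n) (Tr n (μ * y)) +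
              algebraMap (ZMod 2) (GaloisField 2 n) (Tr n (ξ ^ (2 ^ i) * μ * y))) := by
    intro x y
    rw [mul_add μ x y, mul_add (ξ ^ (2 ^ i) * μ) x y, Tr_add, Tr_add, map_add, map_add]
    ring
  let g : GaloisField 2 n →ₗ[ZMod 2] GaloisField 2 n :=
    AddMonoidHom.toZModLinearMap 2 (AddMonoidHom.mk'
      (fun x : GaloisField 2 n => (μ ^ (2 ^ i + 1))⁻¹ *
        (ξ * algebraMap (ZMod 2) (GaloisField 2 n) (Tr n (μ * x)) +
          algebraMap (ZMod 2) (GaloisField 2 n) (Tr n (ξ ^ (2 ^ i) * μ * x)))) hGadd)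
  refine ⟨LinearMap.graph g, ?_, ?_, ?_⟩
  · ext p
    simp only [SetLike.mem_coe, LinearMap.mem_graph_iff, Set.mem_range]
    constructor
    · intro h
      exact ⟨p.1, Prod.ext rfl h.symm⟩
    · rintro ⟨x, rfl⟩
      rfl
  · have hinj : Function.Injective ((LinearMap.id : GaloisField 2 n →ₗ[ZMod 2] GaloisField 2 n).prod g) :=
      fun x y hxy => congrArg Prod.fst hxy
    rw [LinearMap.graph_eq_range_prod, ← LinearEquiv.finrank_eq (LinearEquiv.ofInjective _ hinj)]
    exact GaloisField.finrank 2 hn0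
  · intro p hp hp0
    have hp2 : p.2 = g p.1 := (LinearMap.mem_graph_iff g p).mp hp
    set c := ξ * algebraMap (ZMod 2) (GaloisField 2 n) (Tr n (μ * p.1)) +
      algebraMap (ZMod 2) (GaloisField 2 n) (Tr n (ξ ^ (2 ^ i) * μ * p.1)) with hc
    have hy : p.2 = (μ ^ (2 ^ i + 1))⁻¹ * c := hp2
    by_cases hc0 : c = 0
    · -- b = 0 case
      have hx : p.1 ≠ 0 := by
        intro h0
        apply hp0
        have h2 : p.2 = 0 := by rw [hy, hc0, mul_zero]
        exact Prod.ext h0 h2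
      rw [hy, hc0, mul_zero]
      apply key n i f hf p.1 0 (p.1)⁻¹
      · simp
      · rw [zero_mul, zero_add, mul_inv_cancel₀ hx, hT1]
    · -- b ≠ 0 case
      have hc8 : c ^ 8 = c := by
        rw [hc, show (8 : ℕ) = 2 ^ 3 by norm_num, add_pow_char_pow, mul_pow,
          show (2 : ℕ) ^ 3 = 8 by norm_num, hξ,
          e_pow_self n _ 8 (by norm_num), e_pow_self n _ 8 (by norm_num)]
      have c7 : c ^ 7 = 1 := by
        have h := hc8
        rw [show (8 : ℕ) = 7 + 1 from rfl, pow_succ] at h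
        exact mul_right_cancel₀ hc0 (h.trans (one_mul c).symm)
      rw [hy]
      rcases i3 with him | him
      · -- i % 3 = 1, d = c^2
        have hξi : ξ ^ 2 ^ i = ξ ^ 2 := by rw [pow_red hξ i, him, pow_one]
        have e1 : c ^ 2 ^ i = c ^ 2 := by rw [pow_red hc8 i, him, pow_one]
        have e2 : (c ^ 2) ^ 2 ^ i = c ^ 4 := by
          rw [pow_red (pow8_stable hc8 2) i, him, pow_one, ← pow_mul]
        have e3 : (c ^ 4) ^ 2 ^ i = c := by
          rw [pow_red (pow8_stable hc8 4) i, him, pow_one, ← pow_mul]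
          exact hc8
        have harg : ξ ^ (2 ^ i) * μ * p.1 = ξ ^ 2 * (μ * p.1) := by
          rw [hξi, mul_assoc]
        have hcsq : c ^ 2 = ξ ^ 2 *
            algebraMap (ZMod 2) (GaloisField 2 n) (Tr n (μ * p.1)) +
            algebraMap (ZMod 2) (GaloisField 2 n) (Tr n (ξ ^ 2 * (μ * p.1))) := by
          rw [hc, add_pow_char, mul_pow, e_pow_self n _ 2 (by norm_num),
            e_pow_self n _ 2 (by norm_num), harg]
        apply key_mu n i f hf μ p.1 c (c ^ 2) hμ
        · rw [e1, e2, e3]; ring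
        · rw [e2, show c * (c ^ 4 * c ^ 2) = c ^ 7 by ring, c7]
        · rw [show p.1 * (μ * c ^ 2) = (μ * p.1) * c ^ 2 by ring, hcsq,
            show (μ * p.1) * (ξ ^ 2 * algebraMap (ZMod 2) (GaloisField 2 n) (Tr n (μ * p.1)) +
              algebraMap (ZMod 2) (GaloisField 2 n) (Tr n (ξ ^ 2 * (μ * p.1))))
              = (μ * p.1) * (ξ ^ 2 * algebraMap (ZMod 2) (GaloisField 2 n) (Tr n (μ * p.1)) +
              algebraMap (ZMod 2) (GaloisField 2 n) (Tr n (ξ ^ 2 * (μ * p.1)))) from rfl]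
          exact tr_aux n (μ * p.1) (ξ ^ 2)
        · exact hT1
      · -- i % 3 = 2, d = c^4
        have hξi : ξ ^ 2 ^ i = ξ ^ 4 := by
          rw [pow_red hξ i, him]; norm_num
        have e1 : c ^ 2 ^ i = c ^ 4 := by rw [pow_red hc8 i, him]; norm_num
        have e2 : (c ^ 4) ^ 2 ^ i = c ^ 2 := by
          rw [pow_red (pow8_stable hc8 4) i, him, show (2:ℕ) ^ 2 = 4 by norm_num, ← pow_mul,
            show (4 * 4 : ℕ) = 8 * 2 by norm_num, pow_mul, hc8]
        have e3 : (c ^ 2) ^ 2 ^ i = c := by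
          rw [pow_red (pow8_stable hc8 2) i, him, show (2:ℕ) ^ 2 = 4 by norm_num, ← pow_mul,
            show (2 * 4 : ℕ) = 8 by norm_num]
          exact hc8
        have harg : ξ ^ (2 ^ i) * μ * p.1 = ξ ^ 4 * (μ * p.1) := by
          rw [hξi, mul_assoc]
        have hc4 : c ^ 4 = ξ ^ 4 *
            algebraMap (ZMod 2) (GaloisField 2 n) (Tr n (μ * p.1)) +
            algebraMap (ZMod 2) (GaloisField 2 n) (Tr n (ξ ^ 4 * (μ * p.1))) := by
          rw [show (4 : ℕ) = 2 ^ 2 by norm_num, hc, add_pow_char_pow, mul_pow,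
            show ξ ^ (2:ℕ) ^ 2 = ξ ^ 4 by norm_num,
            e_pow_self n _ (2 ^ 2) (by norm_num), e_pow_self n _ (2 ^ 2) (by norm_num), harg]
        apply key_mu n i f hf μ p.1 c (c ^ 4) hμ
        · rw [e1, e2, e3]; ring
        · rw [e2, show c * (c ^ 2 * c ^ 4) = c ^ 7 by ring, c7]
        · rw [show p.1 * (μ * c ^ 4) = (μ * p.1) * c ^ 4 by ring, hc4]
          exact tr_aux n (μ * p.1) (ξ ^ 4)
        · exact hT1
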